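/- Let U ⊆ ℝⁿ be open, g : U → (ℝⁿ →ₗ ℝⁿ →ₗ ℝ) a smooth map with each g(q) a symmetric nondegenerate bilinear form, with Christoffel symbols Γˡ_{ij}, and kinetic energy T(q,v) = (1/2) g(q)(v,v). Let α : U × ℝⁿ → (ℝⁿ)* be a horizontal 1-form and D(q,v) = (v, f(q,v)) the associated Newton field, fˡ(q,v) = −( Σ_k g^{lk}(q) α_k(q,v) + Σ_{i,j} Γˡ_{ij}(q) vⁱ vʲ ). Then D is a relativistic field, i.e. (fderiv T (q,v))(v, f(q,v)) = 0 for all (q,v) ∈ U × ℝⁿ, if and only if α is a contact form, i.e. α(q,v)(v) = 0 for all (q,v) ∈ U × ℝⁿ. -/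

import Mathlib

/-
Differentiating `T = ½ g(v, v)` along `D = (v, f)` gives `D T = g(v, f) + ½ (∂_v g)(v, v)`, by
symmetry of `g`. Lowering the index of the Newton equation with `g` turns it into
`g(v, f) = -α(v) - Σ Γ_{a,ij} vᵃ vⁱ vʲ` with the Christoffel symbols of the first kind, and this
full contraction equals `½ (∂_v g)(v, v)`: of the three derivative terms in `Γ_{a,ij}` the first two
each give `(∂_v g)(v, v)` and the third gives `-(∂_v g)(v, v)`. Hence `D T = -α(v)`.
-/

/-- The `i`-th standard basis vector of `ℝⁿ`. -/
noncomputable def basisVec {n : ℕ} (i : Fin n) : Fin n → ℝ := Pi.single i 1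

/-- The Christoffel symbols `Γˡ_{ij}(q) = (1/2) Σ_k g^{lk}(q) (∂_i g_{jk} + ∂_j g_{ik} − ∂_k g_{ij})(q)`
of a metric `g` with inverse coefficients `ginv`. -/
noncomputable def christoffel {n : ℕ}
    (g : (Fin n → ℝ) → ((Fin n → ℝ) →L[ℝ] (Fin n → ℝ) →L[ℝ] ℝ))
    (ginv : (Fin n → ℝ) → Fin n → Fin n → ℝ)
    (l i j : Fin n) (q : Fin n → ℝ) : ℝ :=
  (1/2) * ∑ k, ginv q l k *
    (fderiv ℝ (fun p => g p (basisVec j) (basisVec k)) q (basisVec i)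
      + fderiv ℝ (fun p => g p (basisVec i) (basisVec k)) q (basisVec j)
      - fderiv ℝ (fun p => g p (basisVec i) (basisVec j)) q (basisVec k))

/-- The kinetic energy `T(q,v) = (1/2) g(q)(v,v)` on `U × ℝⁿ`. -/
noncomputable def kineticEnergy {n : ℕ}
    (g : (Fin n → ℝ) → ((Fin n → ℝ) →L[ℝ] (Fin n → ℝ) →L[ℝ] ℝ)) :
    (Fin n → ℝ) × (Fin n → ℝ) → ℝ :=
  fun p => (1/2) * g p.1 p.2 p.2

section Coordinates

variable {n : ℕ}

lemma map_eq_sum_basisVec {F M : Type*} [AddCommMonoid M] [Module ℝ M]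
    [FunLike F (Fin n → ℝ) M] [LinearMapClass F ℝ (Fin n → ℝ) M] (φ : F) (w : Fin n → ℝ) :
    φ w = ∑ b, w b • φ (basisVec b) := by
  conv_lhs => rw [pi_eq_sum_univ' w]
  simp [map_sum, map_smul, basisVec]

lemma apply_apply_eq_sum_basisVec {M : Type*} [AddCommGroup M] [Module ℝ M]
    [TopologicalSpace M] [IsTopologicalAddGroup M] [ContinuousConstSMul ℝ M]
    (B : (Fin n → ℝ) →L[ℝ] (Fin n → ℝ) →L[ℝ] M) (v w : Fin n → ℝ) :
    B v w = ∑ i, ∑ j, (v i * w j) • B (basisVec i) (basisVec j) := by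
  rw [map_eq_sum_basisVec B v]
  simp only [FunLike.coe_sum, Finset.sum_apply, FunLike.coe_smul, Pi.smul_apply]
  refine Finset.sum_congr rfl fun i _ => ?_
  rw [map_eq_sum_basisVec (B (basisVec i)) w, Finset.smul_sum]
  simp only [smul_smul]

end Coordinates

section Metric

open Matrix

variable {n : ℕ} (g : (Fin n → ℝ) → ((Fin n → ℝ) →L[ℝ] (Fin n → ℝ) →L[ℝ] ℝ))

noncomputable def metricMatrix (q : Fin n → ℝ) : Matrix (Fin n) (Fin n) ℝ :=
  of fun i j => g q (basisVec i) (basisVec j)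

/-- The Christoffel symbols of the first kind `Γ_{k,ij} = (1/2)(∂_i g_{jk} + ∂_j g_{ik} − ∂_k g_{ij})`;
the first argument of `fderiv ℝ g q` is the direction of differentiation. -/
noncomputable def christoffelFirst (k i j : Fin n) (q : Fin n → ℝ) : ℝ :=
  (1/2) * (fderiv ℝ g q (basisVec i) (basisVec j) (basisVec k)
    + fderiv ℝ g q (basisVec j) (basisVec i) (basisVec k)
    - fderiv ℝ g q (basisVec k) (basisVec i) (basisVec j))

variable {g}

lemma sum_christoffelFirst_mul_eq_half_fderiv (q v : Fin n → ℝ) :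
    ∑ a, v a * ∑ i, ∑ j, christoffelFirst g a i j q * v i * v j
      = (1/2) * fderiv ℝ g q v v v := by
  simp only [christoffelFirst]
  generalize fderiv ℝ g q = G
  have hG_vva : ∀ a, G v v (basisVec a)
      = ∑ i, ∑ j, v i * v j * G (basisVec i) (basisVec j) (basisVec a) := by
    intro a
    rw [apply_apply_eq_sum_basisVec G v v]
    simp
  have hG_vva' : ∀ a, G v v (basisVec a)
      = ∑ i, ∑ j, v i * v j * G (basisVec j) (basisVec i) (basisVec a) := by
    intro a
    rw [hG_vva, Finset.sum_comm]
    simp only [mul_comm (v _) (v _)]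
  have hG_avv : ∀ a, G (basisVec a) v v
      = ∑ i, ∑ j, v i * v j * G (basisVec a) (basisVec i) (basisVec j) := by
    intro a
    simp [apply_apply_eq_sum_basisVec (G (basisVec a)) v v]
  have hinner : ∀ a, ∑ i, ∑ j, (1/2) * (G (basisVec i) (basisVec j) (basisVec a)
        + G (basisVec j) (basisVec i) (basisVec a) - G (basisVec a) (basisVec i) (basisVec j))
        * v i * v j
      = (1/2) * (G v v (basisVec a) + G v v (basisVec a) - G (basisVec a) v v) := by
    intro a
    nth_rewrite 1 [hG_vva a]
    nth_rewrite 1 [hG_vva' a]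
    rw [hG_avv a]
    simp only [Finset.mul_sum, ← Finset.sum_add_distrib, ← Finset.sum_sub_distrib]
    exact Finset.sum_congr rfl fun i _ => Finset.sum_congr rfl fun j _ => by ring
  have hsum_vva : ∑ a, v a * G v v (basisVec a) = G v v v := by
    simp [map_eq_sum_basisVec (G v v) v]
  have hsum_avv : ∑ a, v a * G (basisVec a) v v = G v v v := by
    simp [map_eq_sum_basisVec G v]
  calc _ = ∑ a, v a * ((1/2) * (G v v (basisVec a) + G v v (basisVec a) - G (basisVec a) v v)) :=
        Finset.sum_congr rfl fun a _ => by rw [hinner a]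
    _ = (1/2) * (∑ a, v a * G v v (basisVec a) + ∑ a, v a * G v v (basisVec a)
          - ∑ a, v a * G (basisVec a) v v) := by
        simp only [Finset.mul_sum, ← Finset.sum_add_distrib, ← Finset.sum_sub_distrib]
        exact Finset.sum_congr rfl fun a _ => by ring
    _ = (1/2) * G v v v := by rw [hsum_vva, hsum_avv]; ring

lemma fderiv_apply_apply {q : Fin n → ℝ} (hg : DifferentiableAt ℝ g q) (u w x : Fin n → ℝ) :
    fderiv ℝ (fun p => g p u w) q x = fderiv ℝ g q x u w := by
  rw [((hg.hasFDerivAt.clm_apply (hasFDerivAt_const u q)).clm_apply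
    (hasFDerivAt_const w q)).fderiv]
  simp

lemma christoffel_eq_sum_mul_christoffelFirst {q : Fin n → ℝ} (hg : DifferentiableAt ℝ g q)
    (ginv : (Fin n → ℝ) → Fin n → Fin n → ℝ) (l i j : Fin n) :
    christoffel g ginv l i j q = ∑ k, ginv q l k * christoffelFirst g k i j q := by
  simp only [christoffel, christoffelFirst, fderiv_apply_apply hg, Finset.mul_sum]
  exact Finset.sum_congr rfl fun k _ => by ring

lemma apply_eq_dotProduct_metricMatrix_mulVec (q v w : Fin n → ℝ) :
    g q v w = v ⬝ᵥ (metricMatrix g q *ᵥ w) := by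
  simp only [apply_apply_eq_sum_basisVec (g q) v w, dotProduct, mulVec, metricMatrix,
    of_apply, Finset.mul_sum, smul_eq_mul]
  exact Finset.sum_congr rfl fun i _ => Finset.sum_congr rfl fun j _ => by ring

lemma metricMatrix_mul_eq_one {q : Fin n → ℝ} {ginv : (Fin n → ℝ) → Fin n → Fin n → ℝ}
    (hginv : ∀ i j : Fin n,
      (∑ k, g q (basisVec i) (basisVec k) * ginv q k j) = if i = j then 1 else 0) :
    metricMatrix g q * of (ginv q) = 1 :=
  ext fun i j => by simpa [mul_apply, one_apply, metricMatrix] using hginv i j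

lemma apply_newton_eq {q : Fin n → ℝ} (hg : DifferentiableAt ℝ g q)
    {ginv : (Fin n → ℝ) → Fin n → Fin n → ℝ} (hginv : metricMatrix g q * of (ginv q) = 1)
    (a : (Fin n → ℝ) →L[ℝ] ℝ) (v w : Fin n → ℝ)
    (hw : ∀ l, w l = -((∑ k, ginv q l k * a (basisVec k))
      + ∑ i, ∑ j, christoffel g ginv l i j q * v i * v j)) :
    g q v w = -(a v + (1/2) * fderiv ℝ g q v v v) := by
  set c : Fin n → ℝ := fun k => a (basisVec k) + ∑ i, ∑ j, christoffelFirst g k i j q * v i * v j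
  have hw' : w = -(of (ginv q) *ᵥ c) := by
    funext l
    rw [hw l]
    simp only [christoffel_eq_sum_mul_christoffelFirst hg, Pi.neg_apply, mulVec, dotProduct,
      of_apply, c, mul_add, Finset.sum_add_distrib, Finset.mul_sum, Finset.sum_mul]
    congr 2
    calc _ = ∑ i, ∑ k, ∑ j, ginv q l k * christoffelFirst g k i j q * v i * v j :=
          Finset.sum_congr rfl fun _ _ => Finset.sum_comm
      _ = _ := by
          rw [Finset.sum_comm]
          exact Finset.sum_congr rfl fun _ _ => Finset.sum_congr rfl fun _ _ =>
            Finset.sum_congr rfl fun _ _ => by ring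
  have hc : v ⬝ᵥ c = a v + (1/2) * fderiv ℝ g q v v v := by
    rw [← sum_christoffelFirst_mul_eq_half_fderiv]
    simp only [dotProduct, c, mul_add, Finset.sum_add_distrib, map_eq_sum_basisVec a v,
      smul_eq_mul]
  rw [apply_eq_dotProduct_metricMatrix_mulVec, hw', mulVec_neg, mulVec_mulVec, hginv, one_mulVec,
    dotProduct_neg, hc]

end Metric

lemma fderiv_kineticEnergy_apply {n : ℕ}
    {g : (Fin n → ℝ) → ((Fin n → ℝ) →L[ℝ] (Fin n → ℝ) →L[ℝ] ℝ)} {q : Fin n → ℝ}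
    (hg : DifferentiableAt ℝ g q) (v u w : Fin n → ℝ) :
    fderiv ℝ (kineticEnergy g) (q, v) (u, w)
      = (1/2) * (fderiv ℝ g q u v v + g q w v + g q v w) := by
  have hgp := HasFDerivAt.comp (G := (Fin n → ℝ) →L[ℝ] (Fin n → ℝ) →L[ℝ] ℝ) (q, v)
    hg.hasFDerivAt (hasFDerivAt_fst (𝕜 := ℝ) (p := (q, v)))
  have hT : HasFDerivAt (kineticEnergy g) _ (q, v) :=
    ((hgp.clm_apply hasFDerivAt_snd).clm_apply hasFDerivAt_snd).const_mul (1/2)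
  rw [hT.fderiv]
  simp
  ring

theorem relativistic_iff_contact_general {n : ℕ} (U : Set (Fin n → ℝ)) (hU : IsOpen U)
    (g : (Fin n → ℝ) → ((Fin n → ℝ) →L[ℝ] (Fin n → ℝ) →L[ℝ] ℝ))
    (hg : ContDiffOn ℝ (⊤ : ℕ∞) g U)
    (hsymm : ∀ q ∈ U, ∀ u w : Fin n → ℝ, g q u w = g q w u)
    (ginv : (Fin n → ℝ) → Fin n → Fin n → ℝ)
    (hginv : ∀ q ∈ U, ∀ i j : Fin n,
      (∑ k, g q (basisVec i) (basisVec k) * ginv q k j) = if i = j then 1 else 0)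
    (α : (Fin n → ℝ) × (Fin n → ℝ) → ((Fin n → ℝ) →L[ℝ] ℝ))
    (f : (Fin n → ℝ) × (Fin n → ℝ) → (Fin n → ℝ))
    (hf : ∀ q ∈ U, ∀ (v : Fin n → ℝ) (l : Fin n),
      f (q, v) l = -((∑ k, ginv q l k * α (q, v) (basisVec k))
        + ∑ i, ∑ j, christoffel g ginv l i j q * v i * v j)) :
    (∀ q ∈ U, ∀ v : Fin n → ℝ,
      fderiv ℝ (kineticEnergy g) (q, v) (v, f (q, v)) = 0)
    ↔ (∀ q ∈ U, ∀ v : Fin n → ℝ, α (q, v) v = 0) := by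
  have hDT : ∀ q ∈ U, ∀ v : Fin n → ℝ,
      fderiv ℝ (kineticEnergy g) (q, v) (v, f (q, v)) = -α (q, v) v := by
    intro q hq v
    have hgq : DifferentiableAt ℝ g q :=
      (hg.contDiffAt (hU.mem_nhds hq)).differentiableAt (by simp)
    rw [fderiv_kineticEnergy_apply hgq, hsymm q hq (f (q, v)) v,
      apply_newton_eq hgq (metricMatrix_mul_eq_one (hginv q hq)) _ v _ (hf q hq v)]
    ring
  exact forall₂_congr fun q hq => forall_congr' fun v => by rw [hDT q hq v, neg_eq_zero]

/-- The Newton field `D(q,v) = (v, f(q,v))` of the mechanical system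
`(U, g, α)` is a relativistic field (`D T = 0` everywhere on `U × ℝⁿ`) if and only if
`α` is a contact form (`α(q,v)(v) = 0` everywhere on `U × ℝⁿ`). -/
theorem relativistic_iff_contact {n : ℕ} (U : Set (Fin n → ℝ)) (hU : IsOpen U)
    (g : (Fin n → ℝ) → ((Fin n → ℝ) →L[ℝ] (Fin n → ℝ) →L[ℝ] ℝ))
    (hg : ContDiffOn ℝ (⊤ : ℕ∞) g U)
    (hsymm : ∀ q ∈ U, ∀ u w : Fin n → ℝ, g q u w = g q w u)
    (hnondeg : ∀ q ∈ U, ∀ u : Fin n → ℝ, (∀ w, g q u w = 0) → u = 0)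
    (ginv : (Fin n → ℝ) → Fin n → Fin n → ℝ)
    (hginv : ∀ q ∈ U, ∀ i j : Fin n,
      (∑ k, g q (basisVec i) (basisVec k) * ginv q k j) = if i = j then 1 else 0)
    (α : (Fin n → ℝ) × (Fin n → ℝ) → ((Fin n → ℝ) →L[ℝ] ℝ))
    (f : (Fin n → ℝ) × (Fin n → ℝ) → (Fin n → ℝ))
    (hf : ∀ q ∈ U, ∀ (v : Fin n → ℝ) (l : Fin n),
      f (q, v) l = -((∑ k, ginv q l k * α (q, v) (basisVec k))
        + ∑ i, ∑ j, christoffel g ginv l i j q * v i * v j)) :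
    (∀ q ∈ U, ∀ v : Fin n → ℝ,
      fderiv ℝ (kineticEnergy g) (q, v) (v, f (q, v)) = 0)
    ↔ (∀ q ∈ U, ∀ v : Fin n → ℝ, α (q, v) v = 0) :=
  relativistic_iff_contact_general U hU g hg hsymm ginv hginv α f hf
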